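/- Let n ≥ 0 and let X_1, …, X_n be independent random variables uniformly distributed on [0,1], interpreted as the arrival times of n uniquely ranked options (option i is better than option j iff i > j). For all 0 < t ≤ s ≤ 1, no record arrives in [t,s) if and only if either no option arrives in [0,s), or the best option among those arriving in [0,s) arrives in [0,t); consequently the probability that no record arrives in [t,s) equals (1−s)^n + (1 − (1−s)^n)·(t/s). -/

import Mathlib

open MeasureTheory ProbabilityTheory Set

/-- The event that no record (relative maximum) of the stream `X` arrives in the
interval `[t, s)`: every option `i` arriving in `[t, s)` is beaten by a better option
`j > i` that arrived strictly earlier. -/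
def NoRecordIn {n : ℕ} {Ω : Type*} (X : Fin n → Ω → ℝ) (t s : ℝ) : Set Ω :=
  {ω | ∀ i : Fin n, t ≤ X i ω → X i ω < s → ∃ j : Fin n, i < j ∧ X j ω < X i ω}

/-- **Lemma.**  If `n ≥ 0` uniquely ranked options (option `i` is better than option
`j` iff `i > j`) arrive at independent uniform-`[0,1]` times, then for all
`0 < t ≤ s ≤ 1`: no record arrives in `[t, s)` if and only if either no option arrives
in `[0, s)`, or the best option among those arriving in `[0, s)` arrives in `[0, t)`;
consequently the probability that no record arrives in `[t, s)` equals
`(1-s)^n + (1 - (1-s)^n) (t/s)`. -/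
theorem no_record_iff_and_prob
    {Ω : Type*} [MeasurableSpace Ω] (μ : Measure Ω) [IsProbabilityMeasure μ]
    (n : ℕ) (X : Fin n → Ω → ℝ)
    (hmeas : ∀ i, Measurable (X i))
    (hunif : ∀ i, μ.map (X i) = volume.restrict (Icc (0 : ℝ) 1))
    (hindep : iIndepFun X μ)
    (t s : ℝ) (ht : 0 < t) (hts : t ≤ s) (hs : s ≤ 1) :
    (∀ ω, ω ∈ NoRecordIn X t s ↔
      ((∀ i : Fin n, ¬X i ω < s) ∨
        ∃ b : Fin n, X b ω < t ∧ ∀ i : Fin n, X i ω < s → i ≤ b)) ∧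
    μ (NoRecordIn X t s) =
      ENNReal.ofReal ((1 - s) ^ n + (1 - (1 - s) ^ n) * (t / s)) := by
  have hs0 : (0:ℝ) < s := lt_of_lt_of_le ht hts
  -- Part 1: the pointwise characterization
  have key : ∀ ω, ω ∈ NoRecordIn X t s ↔
      ((∀ i : Fin n, ¬X i ω < s) ∨
        ∃ b : Fin n, X b ω < t ∧ ∀ i : Fin n, X i ω < s → i ≤ b) := by
    intro ω
    constructor
    · intro h
      by_cases hall : ∀ i, ¬ X i ω < s
      · exact Or.inl hall
      · push_neg at hall
        right
        have hne : (Finset.univ.filter (fun i => X i ω < s)).Nonempty := by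
          obtain ⟨i, hi⟩ := hall
          exact ⟨i, by simp [hi]⟩
        set b := (Finset.univ.filter (fun i => X i ω < s)).max' hne with hb
        have hbs : X b ω < s := by
          have := Finset.max'_mem _ hne
          simpa [hb] using this
        have hmax : ∀ i, X i ω < s → i ≤ b := fun i hi =>
          Finset.le_max' _ i (by simp [hi])
        refine ⟨b, ?_, hmax⟩
        by_contra hbt
        push_neg at hbt
        obtain ⟨j, hbj, hj⟩ := h b hbt hbs
        exact absurd (hmax j (hj.trans hbs)) (not_le.mpr hbj)
    · rintro (hall | ⟨b, hbt, hmax⟩)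
      · intro i _ his; exact absurd his (hall i)
      · intro i hti his
        refine ⟨b, ?_, lt_of_lt_of_le hbt hti⟩
        rcases lt_or_eq_of_le (hmax i his) with h | h
        · exact h
        · exact absurd (lt_of_lt_of_le hbt (h ▸ hti)) (lt_irrefl _)
  refine ⟨key, ?_⟩
  -- Part 2: the probability computation
  set A : Set Ω := ⋂ i, X i ⁻¹' Ici s with hA
  set f : Fin n → Fin n → Set ℝ :=
    fun b i => if i = b then Iio t else if b < i then Ici s else univ with hf
  set B : Fin n → Set Ω := fun b => ⋂ i, X i ⁻¹' f b i with hBdef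
  have hBmem : ∀ b ω, ω ∈ B b ↔ (X b ω < t ∧ ∀ i, X i ω < s → i ≤ b) := by
    intro b ω
    simp only [hBdef, mem_iInter, mem_preimage, hf]
    constructor
    · intro h
      refine ⟨by simpa using h b, fun i his => ?_⟩
      by_contra hib
      have hbi : b < i := not_le.mp hib
      have := h i
      rw [if_neg (ne_of_gt hbi), if_pos hbi] at this
      exact absurd his (not_lt.mpr this)
    · rintro ⟨hbt, hmax⟩ i
      by_cases hib : i = b
      · simpa [hib] using hbt
      · rw [if_neg hib]
        by_cases hbi : b < i
        · rw [if_pos hbi]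
          by_contra hsi
          exact absurd (hmax i (not_le.mp hsi)) (not_le.mpr hbi)
        · rw [if_neg hbi]; trivial
  have hset : NoRecordIn X t s = A ∪ ⋃ b, B b := by
    ext ω
    rw [Set.mem_union, key ω]
    constructor
    · rintro (hall | ⟨b, hbt, hmax⟩)
      · left; simp only [hA, mem_iInter, mem_preimage, mem_Ici]
        intro i; exact not_lt.mp (hall i)
      · right; exact Set.mem_iUnion.mpr ⟨b, (hBmem b ω).mpr ⟨hbt, hmax⟩⟩
    · rintro (hAmem | hBm)
      · left; intro i
        simp only [hA, mem_iInter, mem_preimage, mem_Ici] at hAmem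
        exact not_lt.mpr (hAmem i)
      · right
        obtain ⟨b, hb⟩ := Set.mem_iUnion.mp hBm
        exact ⟨b, (hBmem b ω).mp hb⟩
  have hfmeas : ∀ b i, MeasurableSet (f b i) := by
    intro b i
    simp only [hf]
    split_ifs
    · exact measurableSet_Iio
    · exact measurableSet_Ici
    · exact MeasurableSet.univ
  have hAmeas : MeasurableSet A :=
    MeasurableSet.iInter fun i => (hmeas i) measurableSet_Ici
  have hBmeas : ∀ b, MeasurableSet (B b) :=
    fun b => MeasurableSet.iInter fun i => (hmeas i) (hfmeas b i)
  have hAB : Disjoint A (⋃ b, B b) := by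
    rw [Set.disjoint_left]
    intro ω hAm hBm
    obtain ⟨b, hb⟩ := Set.mem_iUnion.mp hBm
    have h1 := ((hBmem b ω).mp hb).1
    simp only [hA, mem_iInter, mem_preimage, mem_Ici] at hAm
    exact absurd (hAm b) (not_le.mpr (h1.trans_le hts))
  have hBB : Pairwise (Function.onFun Disjoint B) := by
    intro b b' hne
    rw [Function.onFun, Set.disjoint_left]
    intro ω h1 h2
    obtain ⟨hb1, hm1⟩ := (hBmem b ω).mp h1
    obtain ⟨hb2, hm2⟩ := (hBmem b' ω).mp h2
    have hle1 : b' ≤ b := hm1 b' (hb2.trans_le hts)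
    have hle2 : b ≤ b' := hm2 b (hb1.trans_le hts)
    exact hne (le_antisymm hle2 hle1)
  have hIci : ∀ i, μ (X i ⁻¹' Ici s) = ENNReal.ofReal (1 - s) := by
    intro i
    rw [← Measure.map_apply (hmeas i) measurableSet_Ici, hunif i,
      Measure.restrict_apply measurableSet_Ici]
    have : Ici s ∩ Icc (0:ℝ) 1 = Icc s 1 := by
      ext x
      simp only [mem_inter_iff, mem_Ici, mem_Icc]
      constructor
      · rintro ⟨h1, _, h3⟩; exact ⟨h1, h3⟩
      · rintro ⟨h1, h2⟩; exact ⟨h1, hs0.le.trans h1, h2⟩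
    rw [this, Real.volume_Icc]
  have hIio : ∀ i, μ (X i ⁻¹' Iio t) = ENNReal.ofReal t := by
    intro i
    rw [← Measure.map_apply (hmeas i) measurableSet_Iio, hunif i,
      Measure.restrict_apply measurableSet_Iio]
    have : Iio t ∩ Icc (0:ℝ) 1 = Ico 0 t := by
      ext x
      simp only [mem_inter_iff, mem_Iio, mem_Icc, mem_Ico]
      constructor
      · rintro ⟨h1, h2, _⟩; exact ⟨h2, h1⟩
      · rintro ⟨h1, h2⟩; exact ⟨h2, h1, h2.le.trans (hts.trans hs)⟩
    rw [this, Real.volume_Ico, sub_zero]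
  -- measure of A
  have hμA : μ A = ENNReal.ofReal ((1 - s) ^ n) := by
    rw [hA, hindep.meas_iInter (fun i => ⟨Ici s, measurableSet_Ici, rfl⟩)]
    simp_rw [hIci]
    rw [Finset.prod_const, Finset.card_univ, Fintype.card_fin,
      ← ENNReal.ofReal_pow (by linarith)]
  -- measure of B b
  have hμB : ∀ b, μ (B b) =
      ENNReal.ofReal t * ENNReal.ofReal ((1 - s) ^ (n - 1 - (b : ℕ))) := by
    intro b
    rw [hBdef]
    rw [hindep.meas_iInter (fun i => ⟨f b i, hfmeas b i, rfl⟩)]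
    have hfac : ∀ i, μ (X i ⁻¹' f b i) =
        if i = b then ENNReal.ofReal t
        else if b < i then ENNReal.ofReal (1 - s) else 1 := by
      intro i
      simp only [hf]
      split_ifs
      · exact hIio i
      · exact hIci i
      · simp
    simp_rw [hfac]
    rw [← Finset.mul_prod_erase Finset.univ _ (Finset.mem_univ b), if_pos rfl]
    congr 1
    have : ∀ i ∈ Finset.univ.erase b,
        (if i = b then ENNReal.ofReal t
         else if b < i then ENNReal.ofReal (1 - s) else 1) =
        (if b < i then ENNReal.ofReal (1 - s) else 1) := by
      intro i hi
      rw [if_neg (Finset.mem_erase.mp hi).1]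
    rw [Finset.prod_congr rfl this, ← Finset.prod_filter]
    have hfe : (Finset.univ.erase b).filter (fun i => b < i) = Finset.Ioi b := by
      ext i
      simp only [Finset.mem_filter, Finset.mem_erase, Finset.mem_univ, Finset.mem_Ioi,
        and_true, true_and]
      constructor
      · rintro ⟨_, h⟩; exact h
      · intro h; exact ⟨ne_of_gt h, h⟩
    rw [hfe, Finset.prod_const, Fin.card_Ioi, ← ENNReal.ofReal_pow (by linarith)]
  -- combine
  rw [hset, measure_union hAB (MeasurableSet.iUnion hBmeas),
    measure_iUnion hBB hBmeas, hμA]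
  simp_rw [hμB]
  have hsum : ∑' (b : Fin n), ENNReal.ofReal t * ENNReal.ofReal ((1 - s) ^ (n - 1 - (b:ℕ)))
      = ENNReal.ofReal ((1 - (1 - s) ^ n) * (t / s)) := by
    rw [tsum_fintype]
    have : ∀ b : Fin n, ENNReal.ofReal t * ENNReal.ofReal ((1 - s) ^ (n - 1 - (b:ℕ)))
        = ENNReal.ofReal (t * (1 - s) ^ (n - 1 - (b:ℕ))) := by
      intro b; rw [ENNReal.ofReal_mul ht.le]
    rw [Finset.sum_congr rfl (fun b _ => this b),
      ← ENNReal.ofReal_sum_of_nonneg (fun b _ => mul_nonneg ht.le (pow_nonneg (by linarith) _))]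
    congr 1
    rw [Fin.sum_univ_eq_sum_range (fun k => t * (1 - s) ^ (n - 1 - k)) n,
      Finset.sum_range_reflect (fun k => t * (1 - s) ^ k) n, ← Finset.mul_sum,
      geom_sum_eq (by intro h; apply absurd h; intro h'; linarith [sub_eq_iff_eq_add.mp h']) n]
    rw [show (1:ℝ) - s - 1 = -s by ring, div_neg, ← neg_div, neg_sub]
    ring
  have hpow : (1 - s) ^ n ≤ 1 := pow_le_one₀ (by linarith) (by linarith)
  rw [hsum, ← ENNReal.ofReal_add (pow_nonneg (by linarith) n)
    (mul_nonneg (by linarith) (div_nonneg ht.le hs0.le))]
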